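/- arXiv:1605.08990 — 6 statements merged into one kernel-verified Lean document; each statement's English description precedes it below -/
import Mathlib

section
/- Let P_m = 1 + √(m/(m-1)) for m ≥ 2. Then π_{P_m}(m·1^∞) - (m-1) has the same sign as (1 + α) - m, where α ≈ 1.32472 is the unique positive root of x^3 - x - 1 (the first Pisot number). Equivalently, π_{P_m}(m1^∞) ≥ m - 1 iff m ≤ 1 + α. -/
/-!
Write `t = m - 1` and `s = √(m/(m-1))`, so that `t s² = t + 1`. Clearing denominators with
this relation gives `π_{1+s}(m1^∞) - t = (s - t) / (s (1 + s))` and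
`s - t = (t + 1 - t³) / (t (s + t))`. Since `α³ = α + 1`, the cubic factors as
`t + 1 - t³ = (α - t)(α² + α t + t² - 1)`, whose second factor is positive for `t ≥ 1`.
Hence `π_{1+s}(m1^∞) - t` is `α - t = (1 + α) - m` times a positive number.
-/

lemma div_one_add_add_one_div_sub_eq {t s : ℝ} (hs : 0 < s) (hts : t * s ^ 2 = t + 1) :
    t / (1 + s) + 1 / s - t = (s - t) / (s * (1 + s)) := by
  field_simp
  linear_combination -hts

lemma sub_eq_div_of_mul_sq_eq {t s : ℝ} (ht : 0 < t) (hs : 0 < s) (hts : t * s ^ 2 = t + 1) :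
    s - t = (t + 1 - t ^ 3) / (t * (s + t)) := by
  field_simp
  linear_combination hts

lemma add_one_sub_pow_three_eq_of_root {α : ℝ} (hroot : α ^ 3 - α - 1 = 0) (t : ℝ) :
    t + 1 - t ^ 3 = (α - t) * (α ^ 2 + α * t + t ^ 2 - 1) := by
  linear_combination -hroot

lemma sign_iff_of_eq_mul_pos {e x c : ℝ} (hc : 0 < c) (h : e = x * c) :
    (0 < e ↔ 0 < x) ∧ (e = 0 ↔ x = 0) ∧ (e < 0 ↔ x < 0) ∧ (0 ≤ e ↔ 0 ≤ x) := by
  subst h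
  refine ⟨mul_pos_iff_of_pos_right hc, by simp [hc.ne'], ?_, mul_nonneg_iff_of_pos_right hc⟩
  rw [← not_le, ← not_le, mul_nonneg_iff_of_pos_right hc]

/-- With `P_m = 1 + √(m/(m-1))`, the quantity `π_{P_m}(m1^∞) - (m-1)` has the
same sign as `(1 + α) - m`, where `α` is the unique positive root of `x^3 - x - 1`.
Equivalently, `π_{P_m}(m1^∞) ≥ m - 1` iff `m ≤ 1 + α`. -/
theorem stmt_4 (m α : ℝ) (hm : 2 ≤ m) (hα : 0 < α) (hroot : α ^ 3 - α - 1 = 0) :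
    (0 < (m - 1) / (1 + Real.sqrt (m / (m - 1))) + 1 / Real.sqrt (m / (m - 1)) - (m - 1)
        ↔ m < 1 + α) ∧
    ((m - 1) / (1 + Real.sqrt (m / (m - 1))) + 1 / Real.sqrt (m / (m - 1)) - (m - 1) = 0
        ↔ m = 1 + α) ∧
    ((m - 1) / (1 + Real.sqrt (m / (m - 1))) + 1 / Real.sqrt (m / (m - 1)) - (m - 1) < 0
        ↔ 1 + α < m) ∧
    (m - 1 ≤ (m - 1) / (1 + Real.sqrt (m / (m - 1))) + 1 / Real.sqrt (m / (m - 1))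
        ↔ m ≤ 1 + α) := by
  have ht : 1 ≤ m - 1 := by linarith
  have hm_div : 0 < m / (m - 1) := by positivity
  set t := m - 1 with t_def
  set s := Real.sqrt (m / t)
  have hs : 0 < s := Real.sqrt_pos.mpr hm_div
  have hts : t * s ^ 2 = t + 1 := by
    rw [Real.sq_sqrt hm_div.le]
    field_simp
    ring
  have hc : 0 < (α ^ 2 + α * t + t ^ 2 - 1) / (t * (s + t)) / (s * (1 + s)) := by
    have : 0 < α ^ 2 + α * t + t ^ 2 - 1 := by nlinarith
    positivity
  have key : t / (1 + s) + 1 / s - t =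
      (1 + α - m) * ((α ^ 2 + α * t + t ^ 2 - 1) / (t * (s + t)) / (s * (1 + s))) := by
    rw [div_one_add_add_one_div_sub_eq hs hts, sub_eq_div_of_mul_sq_eq (by linarith) hs hts,
      add_one_sub_pow_three_eq_of_root hroot t, t_def]
    ring
  obtain ⟨hpos, hzero, hneg, hnonneg⟩ := sign_iff_of_eq_mul_pos hc key
  refine ⟨hpos.trans sub_pos, hzero.trans ?_, hneg.trans sub_neg, ?_⟩
  · rw [sub_eq_zero, eq_comm]
  · rw [← sub_nonneg, hnonneg, sub_nonneg]
end

section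
/- The system of equations (m-1)q/(q^2-1) = 1 and (m-1)/q + (m-1)/q^2 + 1/(q-1) = m-1 has a unique solution (m, q) with q > 2; this q is the unique root greater than 2 of q^2(q-1)(q^2-q-3) = 1, and m = 1 + q - 1/q. Numerically m ≈ 2.91286 and q ≈ 2.34018. -/
/-!
The first equation says `m - 1 = (q² - 1)/q`; substituting this into the second and clearing
denominators leaves `q²(q - 1)(q² - q - 3) = 1`. The left-hand side is strictly increasing on
`[2, ∞)` (its derivative `5q⁴ - 8q³ - 6q² + 6q` is positive there), so it has at most one root
beyond `2`, and the intermediate value theorem places one in `(2.34017, 2.34018)`.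
-/

open Set

noncomputable def eliminant (q : ℝ) : ℝ := q ^ 2 * (q - 1) * (q ^ 2 - q - 3)

lemma hasDerivAt_eliminant (q : ℝ) :
    HasDerivAt eliminant (5 * q ^ 4 - 8 * q ^ 3 - 6 * q ^ 2 + 6 * q) q := by
  have expand : eliminant = fun x => x ^ 5 - 2 * x ^ 4 - 2 * x ^ 3 + 3 * x ^ 2 := by
    funext x
    unfold eliminant
    ring
  rw [expand]
  refine ((((hasDerivAt_pow 5 q).fun_sub ((hasDerivAt_pow 4 q).const_mul 2)).fun_sub
    ((hasDerivAt_pow 3 q).const_mul 2)).fun_add ((hasDerivAt_pow 2 q).const_mul 3)).congr_deriv ?_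
  push_cast
  ring

lemma strictMonoOn_eliminant : StrictMonoOn eliminant (Ici 2) := by
  apply strictMonoOn_of_deriv_pos (convex_Ici 2)
  · exact fun x _ => (hasDerivAt_eliminant x).continuousAt.continuousWithinAt
  · intro x hx
    rw [interior_Ici, mem_Ioi] at hx
    rw [(hasDerivAt_eliminant x).deriv]
    nlinarith [sq_nonneg x, sq_nonneg (x - 2)]

lemma system_iff {m q : ℝ} (hq : 1 < q) :
    ((m - 1) * q / (q ^ 2 - 1) = 1 ∧
      (m - 1) / q + (m - 1) / q ^ 2 + 1 / (q - 1) = m - 1) ↔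
    m = 1 + q - 1 / q ∧ eliminant q = 1 := by
  have hq0 : q ≠ 0 := by positivity
  have hq1 : q - 1 ≠ 0 := sub_ne_zero.2 hq.ne'
  have hq2 : q ^ 2 - 1 ≠ 0 := by nlinarith
  have first_iff : (m - 1) * q / (q ^ 2 - 1) = 1 ↔ m = 1 + q - 1 / q := by
    rw [div_eq_one_iff_eq hq2]
    constructor <;> intro h
    · field_simp
      linear_combination h
    · rw [h]
      field_simp
      ring
  rw [first_iff]
  refine and_congr_right fun hm => ?_
  subst hm
  unfold eliminant
  field_simp
  constructor <;> intro h <;> linear_combination -h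

lemma exists_eliminant_eq_one : ∃ c ∈ Ioo (2.34017 : ℝ) 2.34018, eliminant c = 1 := by
  have hcont : ContinuousOn eliminant (Icc 2.34017 2.34018) := by
    unfold eliminant
    fun_prop
  refine intermediate_value_Ioo (by norm_num) hcont ⟨?_, ?_⟩ <;>
    norm_num [eliminant]

lemma abs_one_add_sub_inv_sub_lt {q : ℝ} (hq : q ∈ Ioo (2.34017 : ℝ) 2.34018) :
    |1 + q - 1 / q - 2.91286| < 0.0001 := by
  obtain ⟨hlo, hhi⟩ := hq
  have hinv_lo : 1 / 2.34018 < 1 / q := one_div_lt_one_div_of_lt (by linarith) hhi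
  have hinv_hi : 1 / q < 1 / 2.34017 := one_div_lt_one_div_of_lt (by norm_num) hlo
  rw [abs_lt]
  constructor <;> norm_num at hinv_lo hinv_hi ⊢ <;> linarith

/-- The system `(m-1)q/(q^2-1) = 1` and `(m-1)/q + (m-1)/q^2 + 1/(q-1) = m-1`
has a unique solution `(m, q)` with `q > 2`; this `q` is the unique root `> 2` of
`q^2(q-1)(q^2-q-3) = 1`, with `m = 1 + q - 1/q`, numerically `m ≈ 2.91286`,
`q ≈ 2.34018`. -/
theorem stmt_10 :
    (∃! p : ℝ × ℝ, 2 < p.2 ∧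
      (p.1 - 1) * p.2 / (p.2 ^ 2 - 1) = 1 ∧
      (p.1 - 1) / p.2 + (p.1 - 1) / p.2 ^ 2 + 1 / (p.2 - 1) = p.1 - 1) ∧
    (∀ m q : ℝ, 2 < q →
      (m - 1) * q / (q ^ 2 - 1) = 1 →
      (m - 1) / q + (m - 1) / q ^ 2 + 1 / (q - 1) = m - 1 →
      q ^ 2 * (q - 1) * (q ^ 2 - q - 3) = 1 ∧ m = 1 + q - 1 / q ∧
      (∀ q' : ℝ, 2 < q' → q' ^ 2 * (q' - 1) * (q' ^ 2 - q' - 3) = 1 → q' = q) ∧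
      |m - 2.91286| < 0.0001 ∧ |q - 2.34018| < 0.0001) := by
  obtain ⟨c, hc, hfc⟩ := exists_eliminant_eq_one
  have hc2 : 2 < c := by linarith [hc.1]
  have root_unique : ∀ q, 2 < q → eliminant q = 1 → q = c := fun q hq hf =>
    strictMonoOn_eliminant.injOn (mem_Ici.2 hq.le) (mem_Ici.2 hc2.le) (hf.trans hfc.symm)
  constructor
  · refine ⟨(1 + c - 1 / c, c), ⟨hc2, (system_iff (by linarith)).2 ⟨rfl, hfc⟩⟩, ?_⟩
    rintro ⟨m, q⟩ ⟨hq, hsys⟩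
    obtain ⟨hm, hf⟩ := (system_iff (by linarith)).1 hsys
    obtain rfl := root_unique q hq hf
    exact Prod.ext hm rfl
  · intro m q hq h1 h2
    obtain ⟨hm, hf⟩ := (system_iff (by linarith)).1 ⟨h1, h2⟩
    obtain rfl := root_unique q hq hf
    refine ⟨hf, hm, fun q' hq' hf' => root_unique q' hq' hf', ?_, ?_⟩
    · rw [hm]
      exact abs_one_add_sub_inv_sub_lt hc
    · rw [abs_lt]
      constructor <;> linarith [hc.1, hc.2]
end

section
/- The system π_q(m(m1)^∞) = m - 1 and q = m - 1 has a unique solution with q > 1, namely q = (1 + √13)/2 and m = (3 + √13)/2, where π_q(m(m1)^∞) = (m-1)/q + 1/(q-1) + (m-1)/(q^2-1). -/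
/-!
Putting `π_q(m(m1)^∞) - (m - 1)` over the common denominator `q (q² - 1)` and substituting
`m - 1 = q` leaves the numerator `-q² (q² - q - 3)`, so for `q > 1` the system is equivalent to
`q² - q - 3 = 0`, whose only positive root is `(1 + √13)/2`.
-/

open Real

lemma div_add_one_div_sub_one_add_div_sq_sub_one_sub {q : ℝ} (a : ℝ) (hq : q ≠ 0)
    (hq2 : q ^ 2 - 1 ≠ 0) :
    a / q + 1 / (q - 1) + a / (q ^ 2 - 1) - a =
      (q * (q + 1) - a * (q ^ 3 - q ^ 2 - 2 * q + 1)) / (q * (q ^ 2 - 1)) := by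
  have hq1 : q - 1 ≠ 0 := fun h => hq2 (by rw [show q = 1 by linarith]; norm_num)
  field_simp
  ring

lemma self_div_add_one_div_sub_one_add_div_sq_sub_one_eq_self_iff {q : ℝ} (hq : 1 < q) :
    q / q + 1 / (q - 1) + q / (q ^ 2 - 1) = q ↔ q ^ 2 - q - 3 = 0 := by
  have hq0 : q ≠ 0 := by positivity
  have hq2 : q ^ 2 - 1 ≠ 0 := by nlinarith
  rw [← sub_eq_zero, div_add_one_div_sub_one_add_div_sq_sub_one_sub q hq0 hq2,
    div_eq_zero_iff, or_iff_left (mul_ne_zero hq0 hq2),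
    show q * (q + 1) - q * (q ^ 3 - q ^ 2 - 2 * q + 1) = -q ^ 2 * (q ^ 2 - q - 3) by ring,
    mul_eq_zero, or_iff_right (by simpa using hq0)]

lemma sq_sub_self_sub_three_eq_zero_iff {q : ℝ} (hq : 0 ≤ q) :
    q ^ 2 - q - 3 = 0 ↔ q = (1 + √13) / 2 := by
  have hs : discrim (1 : ℝ) (-1) (-3) = √13 * √13 := by
    rw [mul_self_sqrt (by norm_num)]; norm_num [discrim]
  have hroots := quadratic_eq_zero_iff one_ne_zero hs q
  simp only [one_mul, neg_neg, mul_one, neg_one_mul, ← sub_eq_add_neg] at hroots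
  rw [sq, hroots, or_iff_left]
  have : 1 < √13 := by rw [lt_sqrt zero_le_one]; norm_num
  linarith

/-- The system `π_q(m(m1)^∞) = m - 1` and `q = m - 1` has a unique solution with
`q > 1`, namely `q = (1+√13)/2`, `m = (3+√13)/2`, where
`π_q(m(m1)^∞) = (m-1)/q + 1/(q-1) + (m-1)/(q^2-1)`. -/
theorem stmt_13 :
    ∀ m q : ℝ, 1 < q →
      (((m - 1) / q + 1 / (q - 1) + (m - 1) / (q ^ 2 - 1) = m - 1 ∧ q = m - 1) ↔
        (q = (1 + Real.sqrt 13) / 2 ∧ m = (3 + Real.sqrt 13) / 2)) := by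
  intro m q hq
  have hroot := sq_sub_self_sub_three_eq_zero_iff (zero_le_one.trans hq.le)
  have hpi := self_div_add_one_div_sub_one_add_div_sq_sub_one_eq_self_iff hq
  constructor
  · rintro ⟨h, hqm⟩
    rw [← hqm] at h
    have hqv := hroot.1 (hpi.1 h)
    exact ⟨hqv, by linarith⟩
  · rintro ⟨hqv, hmv⟩
    have hqm : q = m - 1 := by rw [hqv, hmv]; ring
    refine ⟨?_, hqm⟩
    rw [← hqm]
    exact hpi.2 (hroot.2 hqv)
end

section
/- For every m ≥ 2, setting R_m = 1 + m/(m-1), one has π_{R_m}(m(m1)^∞) < m - 1, where π_q(m(m1)^∞) = (m-1)/q + 1/(q-1) + (m-1)/(q^2-1). -/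
/-!
Write `R = R_m`, so that `(m - 1)(R - 2) = 1`. Over the common denominator `q(q² - 1)`,
`π_q - (m - 1)` has numerator `q(q + 1) - (m - 1)(q³ - q² - 2q + 1)`. Substituting
`q(q + 1) = (m - 1) q(q + 1)(q - 2)` at `q = R` and using the polynomial identity
`R(R + 1)(R - 2) - (R³ - R² - 2R + 1) = -1`, the numerator collapses to `-(m - 1) < 0`,
while the denominator is positive since `R > 2`.
-/

/-- `π_q(m(m1)^∞)` in the paper's notation. -/
noncomputable def piValue (q m : ℝ) : ℝ :=
  (m - 1) / q + 1 / (q - 1) + (m - 1) / (q ^ 2 - 1)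

noncomputable def baseR (m : ℝ) : ℝ := 1 + m / (m - 1)

lemma mul_baseR_sub_two {m : ℝ} (hm : m ≠ 1) : (m - 1) * (baseR m - 2) = 1 := by
  have : m - 1 ≠ 0 := sub_ne_zero.mpr hm
  unfold baseR
  field_simp
  ring

lemma piValue_sub_eq {q : ℝ} (hq : 1 < q) (m : ℝ) :
    piValue q m - (m - 1) =
      (q * (q + 1) - (m - 1) * (q ^ 3 - q ^ 2 - 2 * q + 1)) / (q * (q ^ 2 - 1)) := by
  have hq0 : q ≠ 0 := by positivity
  have hq1 : q - 1 ≠ 0 := by linarith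
  have hq2 : q ^ 2 - 1 ≠ 0 := by nlinarith
  unfold piValue
  field_simp
  ring

lemma piValue_lt_of_mul_sub_two_eq_one {q m : ℝ} (hm : 1 < m) (hqm : (m - 1) * (q - 2) = 1) :
    piValue q m < m - 1 := by
  have hq : 2 < q := by nlinarith
  have hnum : q * (q + 1) - (m - 1) * (q ^ 3 - q ^ 2 - 2 * q + 1) = -(m - 1) := by
    linear_combination -(q * (q + 1)) * hqm
  have hden : 0 < q * (q ^ 2 - 1) := by nlinarith
  have : piValue q m - (m - 1) < 0 := by
    rw [piValue_sub_eq (by linarith) m, hnum]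
    exact div_neg_of_neg_of_pos (by linarith) hden
  linarith

/-- For `m ≥ 2`, with `R_m = 1 + m/(m-1)`, one has `π_{R_m}(m(m1)^∞) < m - 1`,
where `π_q(m(m1)^∞) = (m-1)/q + 1/(q-1) + (m-1)/(q^2-1)`. -/
theorem stmt_14 (m : ℝ) (hm : 2 ≤ m) :
    (m - 1) / (1 + m / (m - 1)) + 1 / ((1 + m / (m - 1)) - 1)
      + (m - 1) / ((1 + m / (m - 1)) ^ 2 - 1) < m - 1 :=
  piValue_lt_of_mul_sub_two_eq_one (by linarith) (mul_baseR_sub_two (by linarith))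
end

section
/- Let A = {a_1 < a_2 < ... < a_J} be a finite real alphabet with J ≥ 2. If q > 1 + (a_J - a_1)/min_{j>1}(a_j - a_{j-1}), then every sequence (c_i) with entries in A is the unique expansion of its value ∑ c_i/q^i in base q over A. -/
/-!
If two digit sequences first differ at position `n`, the `n`-th term of
`∑ (d i - c i) / q ^ (i + 1)` has absolute value at least `δ / q ^ (n + 1)`, `δ` the minimal
gap of the alphabet, while all later terms together are at most
`(a_J - a_1) / ((q - 1) q ^ (n + 1))` in absolute value. The hypothesis on `q` says exactly
that the first bound beats the second, so the difference of the two values cannot vanish.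
-/

open Set

section GeometricTail

variable {q S : ℝ} {x : ℕ → ℝ}

lemma hasSum_one_div_pow_succ (hq : 1 < q) :
    HasSum (fun i : ℕ => 1 / q ^ (i + 1)) (1 / (q - 1)) := by
  have hq0 : 0 < q := by linarith
  have h := (hasSum_geometric_of_lt_one (inv_nonneg.2 hq0.le)
    (inv_lt_one_of_one_lt₀ hq)).mul_left q⁻¹
  have hterm : (fun i : ℕ => q⁻¹ * q⁻¹ ^ i) = fun i => 1 / q ^ (i + 1) := by
    funext i
    rw [← pow_succ', inv_pow, one_div]
  have hsum : q⁻¹ * (1 - q⁻¹)⁻¹ = 1 / (q - 1) := by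
    field_simp
  rwa [hterm, hsum] at h

lemma norm_div_pow_succ_le (hq : 0 < q) (hx : ∀ i, |x i| ≤ S) (i : ℕ) :
    ‖x i / q ^ (i + 1)‖ ≤ S * (1 / q ^ (i + 1)) := by
  have hpow : 0 < q ^ (i + 1) := pow_pos hq _
  rw [Real.norm_eq_abs, abs_div, abs_of_pos hpow, mul_one_div]
  exact div_le_div_of_nonneg_right (hx i) hpow.le

lemma summable_div_pow_succ (hq : 1 < q) (hx : ∀ i, |x i| ≤ S) :
    Summable (fun i => x i / q ^ (i + 1)) :=
  .of_norm_bounded ((hasSum_one_div_pow_succ hq).mul_left S).summable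
    (norm_div_pow_succ_le (zero_lt_one.trans hq) hx)

lemma abs_tsum_div_pow_succ_le (hq : 1 < q) (hx : ∀ i, |x i| ≤ S) :
    |∑' i, x i / q ^ (i + 1)| ≤ S / (q - 1) := by
  simpa only [mul_one_div, Real.norm_eq_abs] using
    tsum_of_norm_bounded ((hasSum_one_div_pow_succ hq).mul_left S)
      (norm_div_pow_succ_le (zero_lt_one.trans hq) hx)

lemma tsum_div_pow_succ_ne_zero (hq : 1 < q) (hx : ∀ i, |x i| ≤ S) {n : ℕ}
    (hzero : ∀ i < n, x i = 0) (hlead : S < |x n| * (q - 1)) :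
    ∑' i, x i / q ^ (i + 1) ≠ 0 := by
  set T := ∑' i, x (i + (n + 1)) / q ^ (i + 1)
  have hT : |T| < |x n| := by
    calc |T| ≤ S / (q - 1) := abs_tsum_div_pow_succ_le hq fun i => hx _
      _ < |x n| := (div_lt_iff₀ (by linarith)).2 hlead
  have hsplit : ∑' i, x i / q ^ (i + 1) = (x n + T) / q ^ (n + 1) := by
    have hhead : ∑ i ∈ Finset.range n, x i / q ^ (i + 1) = 0 :=
      Finset.sum_eq_zero fun i hi => by rw [hzero i (Finset.mem_range.1 hi), zero_div]
    rw [← (summable_div_pow_succ hq hx).sum_add_tsum_nat_add (n + 1), Finset.sum_range_succ,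
      hhead, zero_add, add_div, ← tsum_div_const]
    congr 2 with i
    rw [div_div, ← pow_add]
    ring_nf
  rw [hsplit]
  refine div_ne_zero (fun h => ?_) (pow_pos (by linarith) _).ne'
  rw [add_eq_zero_iff_eq_neg.1 h, abs_neg] at hT
  exact lt_irrefl _ hT

end GeometricTail

section Alphabet

variable {a : ℕ → ℝ} {J i j : ℕ}

lemma MonotoneOn.mem_Icc_of_lt (ha : MonotoneOn a (Iio J)) (hi : i < J) :
    a i ∈ Icc (a 0) (a (J - 1)) :=
  ⟨ha (mem_Iio.2 (by omega)) hi (Nat.zero_le i), ha hi (mem_Iio.2 (by omega)) (by omega)⟩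

lemma StrictMonoOn.exists_gap_le_abs_sub (ha : StrictMonoOn a (Iio J)) (hi : i < J)
    (hj : j < J) (hij : i ≠ j) : ∃ k, 0 < k ∧ k < J ∧ a k - a (k - 1) ≤ |a i - a j| := by
  wlog hlt : i < j generalizing i j
  · rw [abs_sub_comm]
    exact this hj hi hij.symm (lt_of_le_of_ne (not_lt.1 hlt) hij.symm)
  refine ⟨i + 1, i.succ_pos, by omega, ?_⟩
  have hstep : a (i + 1) ≤ a j := ha.monotoneOn (mem_Iio.2 (by omega)) hj hlt
  rw [Nat.add_sub_cancel, abs_sub_comm, abs_of_pos (sub_pos.2 (ha hi hj hlt))]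
  linarith

end Alphabet

theorem stmt_17_general (J : ℕ) (a : ℕ → ℝ)
    (hmono : ∀ i j, i < j → j < J → a i < a j)
    (q : ℝ) (hq1 : 1 < q)
    (hq : ∀ j, 0 < j → j < J → 1 + (a (J - 1) - a 0) / (a j - a (j - 1)) < q) :
    ∀ c : ℕ → ℝ, (∀ n, ∃ i < J, c n = a i) →
      ∀ d : ℕ → ℝ, (∀ n, ∃ i < J, d n = a i) →
        (∑' i : ℕ, d i / q ^ (i + 1)) = (∑' i : ℕ, c i / q ^ (i + 1)) → d = c := by
  intro c hc d hd hsum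
  have ha : StrictMonoOn a (Iio J) := fun i hi j hj hij => hmono i j hij hj
  have hmem : ∀ x : ℕ → ℝ, (∀ n, ∃ i < J, x n = a i) → ∀ n, x n ∈ Icc (a 0) (a (J - 1)) :=
    fun x hx n => by
      obtain ⟨i, hi, hxi⟩ := hx n
      exact hxi ▸ ha.monotoneOn.mem_Icc_of_lt hi
  have hsummable : ∀ x : ℕ → ℝ, (∀ n, ∃ i < J, x n = a i) →
      Summable (fun i => x i / q ^ (i + 1)) := fun x hx =>
    summable_div_pow_succ hq1 fun n => abs_le_max_abs_abs (hmem x hx n).1 (hmem x hx n).2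
  by_contra hne
  have hex : ∃ n, d n ≠ c n := Function.ne_iff.mp hne
  obtain ⟨i, hi, hdi⟩ := hd (Nat.find hex)
  obtain ⟨j, hj, hcj⟩ := hc (Nat.find hex)
  obtain ⟨k, hk0, hkJ, hgap⟩ := ha.exists_gap_le_abs_sub hi hj
    (by rintro rfl; exact Nat.find_spec hex (hdi.trans hcj.symm))
  have hlead : a (J - 1) - a 0 < |d (Nat.find hex) - c (Nat.find hex)| * (q - 1) := by
    have hgap_pos : 0 < a k - a (k - 1) := sub_pos.2 (ha (mem_Iio.2 (by omega)) hkJ (by omega))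
    calc a (J - 1) - a 0 < (a k - a (k - 1)) * (q - 1) := by
          rw [← div_lt_iff₀' hgap_pos]; linarith [hq k hk0 hkJ]
      _ ≤ _ := by rw [hdi, hcj]; gcongr
  refine tsum_div_pow_succ_ne_zero hq1
    (fun n => Real.dist_le_of_mem_Icc (hmem d hd n) (hmem c hc n))
    (fun n hn => sub_eq_zero.2 (not_not.1 (Nat.find_min hex hn))) hlead ?_
  simp_rw [sub_div]
  rw [(hsummable d hd).tsum_sub (hsummable c hc), hsum, sub_self]

/-- Let `A = {a 0 < a 1 < ⋯ < a (J-1)}`, `J ≥ 2`. If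
`q > 1 + (a (J-1) - a 0)/(a j - a (j-1))` for every `0 < j < J` (i.e. `q`
exceeds `1 +` the total spread divided by the minimal gap), then every sequence
with entries in `A` is the unique expansion of its value in base `q` over `A`. -/
theorem stmt_17 (J : ℕ) (hJ : 2 ≤ J) (a : ℕ → ℝ)
    (hmono : ∀ i j, i < j → j < J → a i < a j)
    (q : ℝ) (hq1 : 1 < q)
    (hq : ∀ j, 0 < j → j < J → 1 + (a (J - 1) - a 0) / (a j - a (j - 1)) < q) :
    ∀ c : ℕ → ℝ, (∀ n, ∃ i < J, c n = a i) →
      ∀ d : ℕ → ℝ, (∀ n, ∃ i < J, d n = a i) →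
        (∑' i : ℕ, d i / q ^ (i + 1)) = (∑' i : ℕ, c i / q ^ (i + 1)) → d = c :=
  stmt_17_general J a hmono q hq1 hq
end

section
/- Over the alphabet {0,1} in a base q with 1 < q ≤ φ (the golden ratio), the only sequences in {0,1}^∞ that are unique expansions of their value are the constant sequences 0^∞ and 1^∞. -/
/-!
Let `c` be a unique expansion. If `c n = 0`, the tail after position `n` has value `< 1`:
otherwise raise `c n` to `1` and expand the excess of the tail greedily, which is possible
for `q ≤ 2`. Complementing all digits preserves uniqueness, so after a digit `1` the
complemented tail has value `< 1` as well. For `q ≤ φ` we have `q ^ 2 ≤ q + 1`, i.e.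
`1 / q + 1 / q ^ 2 ≥ 1`, so a change of digits `01` must be followed by `0` and `10` by `1`:
after one change the digits alternate forever. But a tail `1010…` has value
`q / (q ^ 2 - 1) ≥ 1`, again because `q ^ 2 ≤ q + 1`. Hence `c` is constant.
-/

open Finset Filter Topology

def IsBinary (c : ℕ → ℝ) : Prop := ∀ i, c i = 0 ∨ c i = 1

-- Digit `c i` has weight `q ^ (-(i + 1))`: indices start at `0`, unlike the paper's.
noncomputable def expansionValue (q : ℝ) (c : ℕ → ℝ) : ℝ := ∑' i, c i / q ^ (i + 1)

def IsUniqueExpansion (q : ℝ) (c : ℕ → ℝ) : Prop :=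
  IsBinary c ∧ ∀ d, IsBinary d → expansionValue q d = expansionValue q c → d = c

variable {q y : ℝ} {c : ℕ → ℝ}

namespace IsBinary

lemma nonneg (hc : IsBinary c) (i : ℕ) : 0 ≤ c i := by
  rcases hc i with h | h <;> simp [h]

lemma le_one (hc : IsBinary c) (i : ℕ) : c i ≤ 1 := by
  rcases hc i with h | h <;> simp [h]

lemma one_sub (hc : IsBinary c) : IsBinary (1 - c) := fun i => by
  rcases hc i with h | h <;> simp [h]

lemma eq_of_ne_of_ne (hc : IsBinary c) {a b d : ℕ} (hab : c a ≠ c b) (hbd : c b ≠ c d) :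
    c a = c d := by
  rcases hc a with h | h <;> rcases hc b with h' | h' <;> rcases hc d with h'' | h'' <;>
    simp_all

lemma summable (hc : IsBinary c) (hq : 1 < q) : Summable fun i => c i / q ^ (i + 1) := by
  have hgeom : Summable fun i : ℕ => (q⁻¹) ^ (i + 1) :=
    (summable_nat_add_iff 1).mpr <|
      summable_geometric_of_lt_one (by positivity) (inv_lt_one_of_one_lt₀ hq)
  refine .of_nonneg_of_le (fun i => div_nonneg (hc.nonneg i) (by positivity)) (fun i => ?_) hgeom
  rw [inv_pow, ← one_div]
  exact div_le_div_of_nonneg_right (hc.le_one i) (by positivity)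

end IsBinary

lemma isBinary_one : IsBinary 1 := fun _ => Or.inr rfl

lemma expansionValue_one (hq : 1 < q) : expansionValue q 1 = (q - 1)⁻¹ := by
  have : ∀ i : ℕ, (1 : ℕ → ℝ) i / q ^ (i + 1) = q⁻¹ * q⁻¹ ^ i := fun i => by
    simp [pow_succ, mul_comm]
  rw [expansionValue, tsum_congr this, tsum_mul_left,
    tsum_geometric_of_lt_one (by positivity) (inv_lt_one_of_one_lt₀ hq)]
  field_simp

lemma IsBinary.expansionValue_le (hc : IsBinary c) (hq : 1 < q) :
    expansionValue q c ≤ (q - 1)⁻¹ := by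
  rw [← expansionValue_one hq]
  exact (hc.summable hq).tsum_le_tsum
    (fun i => div_le_div_of_nonneg_right (hc.le_one i) (by positivity))
    (isBinary_one.summable hq)

lemma IsBinary.expansionValue_one_sub (hc : IsBinary c) (hq : 1 < q) :
    expansionValue q (1 - c) = (q - 1)⁻¹ - expansionValue q c := by
  rw [← expansionValue_one hq, expansionValue, expansionValue, expansionValue,
    ← (isBinary_one.summable hq).tsum_sub (hc.summable hq)]
  simp only [Pi.sub_apply, sub_div]

lemma IsBinary.expansionValue_eq_sum_add (hc : IsBinary c) (hq : 1 < q) (k : ℕ) :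
    expansionValue q c =
      ∑ i ∈ range k, c i / q ^ (i + 1) + expansionValue q (fun i => c (i + k)) / q ^ k := by
  rw [expansionValue, ← (hc.summable hq).sum_add_tsum_nat_add k, expansionValue,
    ← tsum_div_const]
  congr 1
  refine tsum_congr fun i => ?_
  rw [div_div, ← pow_add]
  ring_nf

lemma IsBinary.one_div_add_one_div_sq_le_expansionValue (hc : IsBinary c) (hq : 1 < q)
    (h0 : c 0 = 1) (h1 : c 1 = 1) : 1 / q + 1 / q ^ 2 ≤ expansionValue q c := by
  have := (hc.summable hq).sum_le_tsum (range 2)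
    (fun i _ => div_nonneg (hc.nonneg i) (by positivity))
  simpa [expansionValue, sum_range_succ, h0, h1] using this

lemma IsBinary.div_sq_sub_one_le_expansionValue (hc : IsBinary c) (hq : 1 < q)
    (heven : ∀ k, c (2 * k) = 1) : q / (q ^ 2 - 1) ≤ expansionValue q c := by
  have hq2 : 1 < q ^ 2 := one_lt_pow₀ hq two_ne_zero
  have hodd : ∀ k : ℕ, c (2 * k) / q ^ (2 * k + 1) = q⁻¹ * (q ^ 2)⁻¹ ^ k := fun k => by
    rw [heven, pow_succ, pow_mul, inv_pow, one_div, mul_inv, mul_comm]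
  have hle := tsum_comp_le_tsum_of_inj (hc.summable hq)
    (fun i => div_nonneg (hc.nonneg i) (by positivity)) (mul_right_injective₀ two_ne_zero)
  simp only [Function.comp_def, hodd, tsum_mul_left] at hle
  rw [tsum_geometric_of_lt_one (by positivity) (inv_lt_one_of_one_lt₀ hq2)] at hle
  convert hle using 1
  · field_simp
  · rfl

noncomputable def greedyDigit (q r : ℝ) : ℝ := if 1 ≤ q * r then 1 else 0

noncomputable def greedyRem (q y : ℝ) : ℕ → ℝ
  | 0 => y
  | n + 1 => q * greedyRem q y n - greedyDigit q (greedyRem q y n)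

lemma isBinary_greedyDigit (q y : ℝ) : IsBinary fun n => greedyDigit q (greedyRem q y n) :=
  fun n => by dsimp only [greedyDigit]; split_ifs <;> simp

lemma greedy_step_mem_Icc (hq : 1 < q) (hq2 : q ≤ 2) {r : ℝ}
    (hr : r ∈ Set.Icc 0 (q - 1)⁻¹) :
    q * r - greedyDigit q r ∈ Set.Icc 0 (q - 1)⁻¹ := by
  have hq1 : 0 < q - 1 := sub_pos.mpr hq
  have hone : 1 ≤ (q - 1)⁻¹ := one_le_inv₀ hq1 |>.mpr (by linarith)
  have htop : q * (q - 1)⁻¹ - 1 = (q - 1)⁻¹ := by field_simp; ring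
  have hqr : q * r ≤ q * (q - 1)⁻¹ := mul_le_mul_of_nonneg_left hr.2 (by positivity)
  unfold greedyDigit
  split_ifs with h
  · constructor <;> linarith
  · constructor <;> nlinarith [hr.1]

lemma greedyRem_mem_Icc (hq : 1 < q) (hq2 : q ≤ 2) (hy : y ∈ Set.Icc 0 (q - 1)⁻¹) (n : ℕ) :
    greedyRem q y n ∈ Set.Icc 0 (q - 1)⁻¹ := by
  induction n with
  | zero => exact hy
  | succ n ih => exact greedy_step_mem_Icc hq hq2 ih

lemma sum_greedyDigit (hq : q ≠ 0) (N : ℕ) :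
    ∑ i ∈ range N, greedyDigit q (greedyRem q y i) / q ^ (i + 1) =
      y - greedyRem q y N / q ^ N := by
  induction N with
  | zero => simp [greedyRem]
  | succ N ih =>
    rw [sum_range_succ, ih, greedyRem]
    field_simp
    ring

lemma hasSum_greedyDigit (hq : 1 < q) (hq2 : q ≤ 2) (hy : y ∈ Set.Icc 0 (q - 1)⁻¹) :
    HasSum (fun i => greedyDigit q (greedyRem q y i) / q ^ (i + 1)) y := by
  have hrem := greedyRem_mem_Icc hq hq2 hy
  rw [hasSum_iff_tendsto_nat_of_nonneg
    (fun i => div_nonneg ((isBinary_greedyDigit q y).nonneg i) (by positivity))]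
  simp only [sum_greedyDigit (by positivity : q ≠ 0)]
  suffices Tendsto (fun N => greedyRem q y N / q ^ N) atTop (𝓝 0) by
    simpa using this.const_sub y
  have hgeom : Tendsto (fun N : ℕ => (q - 1)⁻¹ * q⁻¹ ^ N) atTop (𝓝 0) := by
    simpa using (tendsto_pow_atTop_nhds_zero_of_lt_one (by positivity)
      (inv_lt_one_of_one_lt₀ hq)).const_mul (q - 1)⁻¹
  refine squeeze_zero (fun N => div_nonneg (hrem N).1 (by positivity)) (fun N => ?_) hgeom
  rw [inv_pow, ← div_eq_mul_inv]
  exact div_le_div_of_nonneg_right (hrem N).2 (by positivity)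

lemma exists_isBinary_expansionValue_eq (hq : 1 < q) (hq2 : q ≤ 2)
    (hy : y ∈ Set.Icc 0 (q - 1)⁻¹) : ∃ d, IsBinary d ∧ expansionValue q d = y :=
  ⟨_, isBinary_greedyDigit q y, (hasSum_greedyDigit hq hq2 hy).tsum_eq⟩

lemma one_le_one_div_add_one_div_sq (hq : 0 < q) (hφ : q ^ 2 ≤ q + 1) :
    1 ≤ 1 / q + 1 / q ^ 2 := by
  rw [show 1 / q + 1 / q ^ 2 = (q + 1) / q ^ 2 by field_simp, one_le_div₀ (by positivity)]
  exact hφ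

lemma one_le_div_sq_sub_one (hq : 1 < q) (hφ : q ^ 2 ≤ q + 1) : 1 ≤ q / (q ^ 2 - 1) := by
  rw [one_le_div₀ (by nlinarith)]
  linarith

lemma sq_le_add_one_of_le_goldenRatio (hq : 0 ≤ q) (h : q ≤ Real.goldenRatio) :
    q ^ 2 ≤ q + 1 := by
  nlinarith [Real.goldenRatio_sq, Real.one_lt_goldenRatio]

namespace IsUniqueExpansion

lemma one_sub (hu : IsUniqueExpansion q c) (hq : 1 < q) : IsUniqueExpansion q (1 - c) := by
  refine ⟨hu.1.one_sub, fun d hd hdc => ?_⟩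
  have : 1 - d = c := hu.2 _ hd.one_sub <| by
    rw [hd.expansionValue_one_sub hq, hdc, hu.1.expansionValue_one_sub hq, sub_sub_cancel]
  rw [← this, sub_sub_cancel]

lemma tail_lt_one (hu : IsUniqueExpansion q c) (hq : 1 < q) (hq2 : q ≤ 2) {n : ℕ}
    (hn : c n = 0) : expansionValue q (fun i => c (i + (n + 1))) < 1 := by
  have htail : IsBinary fun i => c (i + (n + 1)) := fun i => hu.1 _
  by_contra! hx
  obtain ⟨e, he, hev⟩ := exists_isBinary_expansionValue_eq hq hq2
    (y := expansionValue q (fun i => c (i + (n + 1))) - 1)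
    ⟨by linarith, by linarith [htail.expansionValue_le hq]⟩
  set d : ℕ → ℝ := fun i => if i < n then c i else if i = n then 1 else e (i - (n + 1))
  have hd : IsBinary d := fun i => by
    dsimp only [d]; split_ifs
    exacts [hu.1 i, Or.inr rfl, he _]
  have hdtail : (fun i => d (i + (n + 1))) = e := funext fun i => by
    simp only [d, if_neg (show ¬ i + (n + 1) < n by omega),
      if_neg (show i + (n + 1) ≠ n by omega), Nat.add_sub_cancel]
  have hprefix : ∑ i ∈ range (n + 1), d i / q ^ (i + 1) =
      ∑ i ∈ range (n + 1), c i / q ^ (i + 1) + 1 / q ^ (n + 1) := by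
    have hhead : ∑ i ∈ range n, d i / q ^ (i + 1) = ∑ i ∈ range n, c i / q ^ (i + 1) :=
      sum_congr rfl fun i hi => by simp only [d, if_pos (mem_range.mp hi)]
    rw [sum_range_succ, sum_range_succ, hhead, hn]
    simp [d]
  have hdc := hu.2 d hd <| by
    rw [hd.expansionValue_eq_sum_add hq (n + 1), hu.1.expansionValue_eq_sum_add hq (n + 1),
      hdtail, hev, hprefix]
    ring
  simpa [d, hn] using congrFun hdc n

lemma succ_ne_succ_succ (hu : IsUniqueExpansion q c) (hq : 1 < q) (hφ : q ^ 2 ≤ q + 1)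
    {n : ℕ} (h : c n ≠ c (n + 1)) : c (n + 1) ≠ c (n + 2) := by
  wlog hn : c n = 0 generalizing c
  · have hn1 : c n = 1 := (hu.1 n).resolve_left hn
    have := this (hu.one_sub hq) (by simpa using h) (by simp [hn1])
    simpa using this
  intro h2
  have h1 : c (n + 1) = 1 := (hu.1 _).resolve_left (hn ▸ h.symm)
  have hlow := IsBinary.one_div_add_one_div_sq_le_expansionValue (fun i => hu.1 (i + (n + 1))) hq
    (by simpa using h1) (by rw [show 1 + (n + 1) = n + 2 by omega, ← h2, h1])
  have hlt := hu.tail_lt_one hq (by nlinarith) hn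
  linarith [one_le_one_div_add_one_div_sq (by positivity) hφ]

lemma add_ne_add_succ (hu : IsUniqueExpansion q c) (hq : 1 < q) (hφ : q ^ 2 ≤ q + 1)
    {n : ℕ} (h : c n ≠ c (n + 1)) (m : ℕ) : c (n + m) ≠ c (n + m + 1) := by
  induction m with
  | zero => exact h
  | succ m ih => exact hu.succ_ne_succ_succ hq hφ ih

lemma succ_eq (hu : IsUniqueExpansion q c) (hq : 1 < q) (hφ : q ^ 2 ≤ q + 1)
    (n : ℕ) : c (n + 1) = c n := by
  wlog hn : c n = 0 generalizing c
  · have hn1 : c n = 1 := (hu.1 n).resolve_left hn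
    simpa using this (hu.one_sub hq) (by simp [hn1])
  by_contra h
  have hswitch := hu.add_ne_add_succ hq hφ (Ne.symm h)
  have heven : ∀ k, c (2 * k + (n + 1)) = 1 := by
    intro k
    induction k with
    | zero => simpa using (hu.1 (n + 1)).resolve_left (by rwa [hn] at h)
    | succ k ih =>
      have h1 := hswitch (2 * k + 1)
      have h2 := hswitch (2 * k + 2)
      rw [show n + (2 * k + 1) = 2 * k + (n + 1) by ring,
        show 2 * k + (n + 1) + 1 = n + (2 * k + 2) by ring] at h1
      rw [show n + (2 * k + 2) + 1 = 2 * (k + 1) + (n + 1) by ring] at h2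
      rw [← ih]
      exact hu.1.eq_of_ne_of_ne h2.symm h1.symm
  have hlow := IsBinary.div_sq_sub_one_le_expansionValue (fun i => hu.1 (i + (n + 1))) hq heven
  have hlt := hu.tail_lt_one hq (by nlinarith) hn
  linarith [one_le_div_sq_sub_one hq hφ]

lemma eq_zero_or_eq_one (hu : IsUniqueExpansion q c) (hq : 1 < q) (hφ : q ^ 2 ≤ q + 1) :
    (∀ i, c i = 0) ∨ (∀ i, c i = 1) := by
  have hconst : ∀ i, c i = c 0 := fun i => by
    induction i with
    | zero => rfl
    | succ i ih => rw [hu.succ_eq hq hφ i, ih]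
  rcases hu.1 0 with h | h
  · exact .inl fun i => (hconst i).trans h
  · exact .inr fun i => (hconst i).trans h

end IsUniqueExpansion

/-- Over the alphabet `{0,1}` in a base `1 < q ≤ φ`, the only sequences in
`{0,1}^∞` that are unique expansions of their value are `0^∞` and `1^∞`. -/
theorem stmt_18 (q : ℝ) (hq1 : 1 < q) (hq2 : q ≤ (1 + Real.sqrt 5) / 2) :
    ∀ c : ℕ → ℝ, (∀ i, c i = 0 ∨ c i = 1) →
      (∀ d : ℕ → ℝ, (∀ i, d i = 0 ∨ d i = 1) →
        (∑' i : ℕ, d i / q ^ (i + 1)) = (∑' i : ℕ, c i / q ^ (i + 1)) → d = c) →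
      (∀ i, c i = 0) ∨ (∀ i, c i = 1) :=
  fun _ hc hu => IsUniqueExpansion.eq_zero_or_eq_one ⟨hc, hu⟩ hq1
    (sq_le_add_one_of_le_goldenRatio (by linarith) hq2)
end
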